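/- arXiv:0707.3344 — 4 statements merged into one kernel-verified Lean document; each statement's English description precedes it below -/
import Mathlib

section
/- Conversely, given real numbers K₀, K₁, K₂, K₃ with K₀ ≥ 0 and K₀² - K₁² - K₂² - K₃² ≥ 0, there exist complex 2-vectors φ₁, φ₂ ∈ ℂ² such that K₀ = |φ₁|² + |φ₂|², K₁ = 2 Re⟨φ₁, φ₂⟩, K₂ = 2 Im⟨φ₁, φ₂⟩, K₃ = |φ₁|² - |φ₂|². -/
/-!
The Gram matrix `(herm φᵢ φⱼ)ᵢⱼ` of two doublets is `(K₀ + K⃗ ⬝ σ⃗) / 2`, a Hermitian matrix with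
trace `K₀` and determinant `(K₀² - |K⃗|²) / 4`. The light-cone conditions therefore say exactly that
this matrix is positive semidefinite, and every positive semidefinite matrix is a Gram matrix
`Bᴴ B`: the columns of `B` are the required doublets.
-/

open Finset

/-- Hermitian inner product on ℂ². -/
noncomputable def herm (a b : Fin 2 → ℂ) : ℂ := ∑ i, (starRingEnd ℂ) (a i) * b i

open Matrix Complex
open scoped ComplexOrder MatrixOrder

theorem Matrix.IsHermitian.posSemidef_of_trace_nonneg_of_det_nonneg {𝕜 : Type*} [RCLike 𝕜]
    {A : Matrix (Fin 2) (Fin 2) 𝕜} (hA : A.IsHermitian) (htr : 0 ≤ A.trace) (hdet : 0 ≤ A.det) :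
    A.PosSemidef := by
  rw [hA.trace_eq_sum_eigenvalues, Fin.sum_univ_two, ← RCLike.ofReal_add,
    RCLike.ofReal_nonneg] at htr
  rw [hA.det_eq_prod_eigenvalues, Fin.prod_univ_two, ← RCLike.ofReal_mul,
    RCLike.ofReal_nonneg] at hdet
  simp only [hA.posSemidef_iff_eigenvalues_nonneg, Pi.le_def, Fin.forall_fin_two, Pi.zero_apply]
  constructor <;> nlinarith

theorem Matrix.PosSemidef.exists_eq_conjTranspose_mul_self {n 𝕜 : Type*} [Fintype n]
    [DecidableEq n] [RCLike 𝕜] {A : Matrix n n 𝕜} (hA : A.PosSemidef) :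
    ∃ B : Matrix n n 𝕜, A = Bᴴ * B :=
  CStarAlgebra.nonneg_iff_eq_star_mul_self.mp hA.nonneg

theorem herm_eq_conjTranspose_mul_apply (B : Matrix (Fin 2) (Fin 2) ℂ) (i j : Fin 2) :
    herm (fun k ↦ B k i) (fun k ↦ B k j) = (Bᴴ * B) i j := by
  simp [herm, Matrix.mul_apply]

noncomputable def kMatrix (K₀ K₁ K₂ K₃ : ℝ) : Matrix (Fin 2) (Fin 2) ℂ :=
  !![(K₀ + K₃) / 2, (K₁ + K₂ * I) / 2; (K₁ - K₂ * I) / 2, (K₀ - K₃) / 2]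

theorem kMatrix_isHermitian (K₀ K₁ K₂ K₃ : ℝ) : (kMatrix K₀ K₁ K₂ K₃).IsHermitian := by
  ext i j
  fin_cases i <;> fin_cases j <;> simp [kMatrix, Complex.ext_iff]

theorem kMatrix_trace (K₀ K₁ K₂ K₃ : ℝ) : (kMatrix K₀ K₁ K₂ K₃).trace = K₀ := by
  rw [kMatrix, trace_fin_two_of]
  ring

theorem kMatrix_det (K₀ K₁ K₂ K₃ : ℝ) :
    (kMatrix K₀ K₁ K₂ K₃).det = ((K₀ ^ 2 - K₁ ^ 2 - K₂ ^ 2 - K₃ ^ 2) / 4 : ℝ) := by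
  rw [kMatrix, det_fin_two_of]
  push_cast
  linear_combination (K₂ ^ 2 / 4 : ℂ) * I_sq

theorem kMatrix_posSemidef {K₀ K₁ K₂ K₃ : ℝ} (h0 : 0 ≤ K₀)
    (hlc : 0 ≤ K₀ ^ 2 - K₁ ^ 2 - K₂ ^ 2 - K₃ ^ 2) : (kMatrix K₀ K₁ K₂ K₃).PosSemidef :=
  (kMatrix_isHermitian K₀ K₁ K₂ K₃).posSemidef_of_trace_nonneg_of_det_nonneg
    (by simpa [kMatrix_trace] using h0)
    (by rw [kMatrix_det]; exact_mod_cast div_nonneg hlc zero_le_four)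

theorem exists_fields_for_light_cone_point (K₀ K₁ K₂ K₃ : ℝ)
    (h0 : 0 ≤ K₀) (hlc : 0 ≤ K₀ ^ 2 - K₁ ^ 2 - K₂ ^ 2 - K₃ ^ 2) :
    ∃ φ₁ φ₂ : Fin 2 → ℂ,
      K₀ = (herm φ₁ φ₁).re + (herm φ₂ φ₂).re ∧
      K₁ = 2 * (herm φ₁ φ₂).re ∧
      K₂ = 2 * (herm φ₁ φ₂).im ∧
      K₃ = (herm φ₁ φ₁).re - (herm φ₂ φ₂).re := by
  obtain ⟨B, hB⟩ := (kMatrix_posSemidef h0 hlc).exists_eq_conjTranspose_mul_self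
  refine ⟨fun k ↦ B k 0, fun k ↦ B k 1, ?_⟩
  simp only [herm_eq_conjTranspose_mul_apply, ← hB]
  norm_num [kMatrix]
  refine ⟨?_, ?_, ?_, ?_⟩ <;> ring
end

section
/- Let ξ, η ∈ ℝ³ and E a real symmetric 3×3 matrix. If there exists R ∈ SO(3) such that (Rξ)₂ = 0, (Rη)₂ = 0, and (R E Rᵀ)₁₂ = (R E Rᵀ)₂₃ = 0, then the four invariants vanish: (ξ×η)ᵀEξ = 0, (ξ×η)ᵀEη = 0, (ξ×(Eξ))ᵀE²ξ = 0, (η×(Eη))ᵀE²η = 0. -/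
/-!
In the frame given by `R`, the vectors `Rξ`, `Rη` lie in the plane `x₂ = 0`, and the
conditions on `F = R E Rᵀ` (with its symmetry) say that this plane is `F`-invariant. Hence each
of the four triples, transported by `R`, consists of three vectors in a common plane, so its
determinant vanishes; since `det R = 1` the triple product is invariant under `R`.
-/

open Matrix

theorem Matrix.IsSymm.mul_mul_transpose {n α : Type*} [Fintype n] [CommSemiring α]
    {E : Matrix n n α} (hE : E.IsSymm) (R : Matrix n n α) : (R * E * Rᵀ).IsSymm := by
  rw [IsSymm, transpose_mul, transpose_mul, transpose_transpose, hE.eq, Matrix.mul_assoc]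

theorem Matrix.mulVec_mul_mul_transpose {n α : Type*} [Fintype n] [DecidableEq n]
    [CommSemiring α] {R : Matrix n n α} (hR : Rᵀ * R = 1) (E : Matrix n n α) (x : n → α) :
    (R * E * Rᵀ) *ᵥ (R *ᵥ x) = R *ᵥ (E *ᵥ x) := by
  rw [mulVec_mulVec, Matrix.mul_assoc, hR, Matrix.mul_one, mulVec_mulVec]

theorem Matrix.mulVec_apply_eq_zero_of_row_offDiag {n α : Type*} [Fintype n]
    [NonUnitalNonAssocSemiring α] {M : Matrix n n α} {x : n → α} {i : n}
    (hM : ∀ j, j ≠ i → M i j = 0) (hx : x i = 0) :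
    (M *ᵥ x) i = 0 := by
  refine Finset.sum_eq_zero fun j _ => ?_
  by_cases hj : j = i
  · simp [hj, hx]
  · simp [hM j hj]

theorem cross_dotProduct_mulVec {α : Type*} [CommRing α] (R : Matrix (Fin 3) (Fin 3) α)
    (a b c : Fin 3 → α) :
    ((R *ᵥ a) ⨯₃ (R *ᵥ b)) ⬝ᵥ (R *ᵥ c) = R.det * ((a ⨯₃ b) ⬝ᵥ c) := by
  have hrows : Matrix.of ![R *ᵥ c, R *ᵥ a, R *ᵥ b] = Matrix.of ![c, a, b] * Rᵀ := by
    ext i j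
    fin_cases i <;> simp [mul_apply, mulVec, dotProduct, mul_comm]
  rw [dotProduct_comm, triple_product_eq_det, dotProduct_comm (a ⨯₃ b), triple_product_eq_det]
  change (Matrix.of ![R *ᵥ c, R *ᵥ a, R *ᵥ b]).det = R.det * (Matrix.of ![c, a, b]).det
  rw [hrows, det_mul, det_transpose, mul_comm]

theorem cross_dotProduct_eq_zero_of_apply_eq_zero {α : Type*} [CommRing α] {a b c : Fin 3 → α}
    (ha : a 1 = 0) (hb : b 1 = 0) (hc : c 1 = 0) : (a ⨯₃ b) ⬝ᵥ c = 0 := by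
  simp [cross_apply, dotProduct, Fin.sum_univ_three, ha, hb, hc]

theorem invariants_vanish_of_exists_CP_basis
    (ξ η : Fin 3 → ℝ) (E : Matrix (Fin 3) (Fin 3) ℝ) (hE : E.IsSymm)
    (h : ∃ R : Matrix (Fin 3) (Fin 3) ℝ, R * Rᵀ = 1 ∧ R.det = 1 ∧
      R.mulVec ξ 1 = 0 ∧ R.mulVec η 1 = 0 ∧
      (R * E * Rᵀ) 0 1 = 0 ∧ (R * E * Rᵀ) 1 2 = 0) :
    (ξ ⨯₃ η) ⬝ᵥ E.mulVec ξ = 0 ∧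
    (ξ ⨯₃ η) ⬝ᵥ E.mulVec η = 0 ∧
    (ξ ⨯₃ E.mulVec ξ) ⬝ᵥ (E * E).mulVec ξ = 0 ∧
    (η ⨯₃ E.mulVec η) ⬝ᵥ (E * E).mulVec η = 0 := by
  obtain ⟨R, hR, hdet, hξ, hη, hF01, hF12⟩ := h
  have hRtR : Rᵀ * R = 1 := mul_eq_one_comm.mp hR
  have hrow : ∀ j, j ≠ 1 → (R * E * Rᵀ) 1 j = 0 := by
    intro j hj
    fin_cases j
    · rw [← (hE.mul_mul_transpose R).apply]; exact hF01
    · exact absurd rfl hj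
    · exact hF12
  have hinv : ∀ x, (R *ᵥ x) 1 = 0 → (R *ᵥ (E *ᵥ x)) 1 = 0 := fun x hx => by
    rw [← mulVec_mul_mul_transpose hRtR]
    exact mulVec_apply_eq_zero_of_row_offDiag hrow hx
  have htriple : ∀ a b c, (R *ᵥ a) 1 = 0 → (R *ᵥ b) 1 = 0 → (R *ᵥ c) 1 = 0 →
      (a ⨯₃ b) ⬝ᵥ c = 0 := fun a b c ha hb hc => by
    rw [← one_mul ((a ⨯₃ b) ⬝ᵥ c), ← hdet, ← cross_dotProduct_mulVec]
    exact cross_dotProduct_eq_zero_of_apply_eq_zero ha hb hc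
  simp only [← mulVec_mulVec]
  exact ⟨htriple _ _ _ hξ hη (hinv _ hξ), htriple _ _ _ hξ hη (hinv _ hη),
    htriple _ _ _ hξ (hinv _ hξ) (hinv _ (hinv _ hξ)),
    htriple _ _ _ hη (hinv _ hη) (hinv _ (hinv _ hη))⟩
end

section
/- Let ξ, η ∈ ℝ³ and E a real symmetric 3×3 matrix. If (ξ×η)ᵀEξ = 0, (ξ×η)ᵀEη = 0, (ξ×(Eξ))ᵀE²ξ = 0, and (η×(Eη))ᵀE²η = 0, then there exists R ∈ SO(3) such that (Rξ)₂ = 0, (Rη)₂ = 0, and (R E Rᵀ)₁₂ = (R E Rᵀ)₂₃ = 0. -/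
/-!
A rotation whose middle row is a unit eigenvector `u` of `E` orthogonal to `ξ` and `η` does the
job, so everything reduces to finding such a `u`. If `p = ξ × η ≠ 0`, the first two invariants say
that `E p` is orthogonal to `ξ` and `η`, hence parallel to `p`. If `ξ × η = 0`, the vectors are
parallel and the third (or fourth) invariant plays the same role for the pair `ξ, Eξ`: either
`ξ × Eξ` is an eigenvector, or `ξ` itself is one, and then the spectral theorem supplies an
eigenvector orthogonal to it.
-/

open Matrix

infixl:74 " ×₃ " => crossProduct

theorem Matrix.IsSymm.dotProduct_mulVec_comm {n R : Type*} [Fintype n] [CommSemiring R]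
    {E : Matrix n n R} (hE : E.IsSymm) (a b : n → R) : a ⬝ᵥ E *ᵥ b = E *ᵥ a ⬝ᵥ b := by
  rw [dotProduct_mulVec, ← vecMul_transpose, hE.eq]

theorem exists_smul_dotProduct_self_eq_one {n : Type*} [Fintype n] {v : n → ℝ} (hv : v ≠ 0) :
    ∃ s : ℝ, s • v ⬝ᵥ s • v = 1 := by
  have hpos : 0 < v ⬝ᵥ v := by simpa using dotProduct_self_star_pos_iff.mpr hv
  refine ⟨(√(v ⬝ᵥ v))⁻¹, ?_⟩
  rw [smul_dotProduct, dotProduct_smul, smul_eq_mul, smul_eq_mul, ← mul_assoc, ← mul_inv,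
    Real.mul_self_sqrt hpos.le, inv_mul_cancel₀ hpos.ne']

theorem exists_eq_smul_of_cross_eq_zero {K : Type*} [Field K] {p x : Fin 3 → K} (hp : p ≠ 0)
    (h : p ×₃ x = 0) : ∃ k : K, x = k • p := by
  by_contra! hx
  exact crossProduct_ne_zero_iff_linearIndependent.mpr
    ((LinearIndependent.pair_iff' hp).mpr fun k hk => hx k hk.symm) h

theorem exists_mulVec_cross_eq_smul {K : Type*} [Field K] {E : Matrix (Fin 3) (Fin 3) K}
    (hE : E.IsSymm) {a b : Fin 3 → K} (hab : a ×₃ b ≠ 0)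
    (ha : (a ×₃ b) ⬝ᵥ E *ᵥ a = 0) (hb : (a ×₃ b) ⬝ᵥ E *ᵥ b = 0) :
    ∃ c : K, E *ᵥ (a ×₃ b) = c • (a ×₃ b) := by
  refine exists_eq_smul_of_cross_eq_zero hab ?_
  rw [cross_cross_eq_smul_sub_smul, dotProduct_comm a, dotProduct_comm b,
    ← hE.dotProduct_mulVec_comm, ← hE.dotProduct_mulVec_comm, ha, hb, zero_smul, zero_smul,
    sub_zero]

theorem Matrix.IsSymm.exists_eigenvector_dotProduct_eq_zero_of_mulVec_eq_smul
    {n : Type*} [Fintype n] [DecidableEq n] [Nontrivial n] {E : Matrix n n ℝ} (hE : E.IsSymm)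
    {ξ : n → ℝ} {c : ℝ} (hξ : E *ᵥ ξ = c • ξ) :
    ∃ u ≠ 0, ∃ μ : ℝ, E *ᵥ u = μ • u ∧ u ⬝ᵥ ξ = 0 := by
  have hH : E.IsHermitian := isHermitian_iff_isSymm.mpr hE
  set v : n → n → ℝ := fun i => ⇑(hH.eigenvectorBasis i)
  have hv : ∀ i j, v i ⬝ᵥ v j = if i = j then 1 else 0 := by
    intro i j
    simpa [v, EuclideanSpace.inner_eq_star_dotProduct, dotProduct_comm, eq_comm] using
      orthonormal_iff_ite.mp hH.eigenvectorBasis.orthonormal j i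
  have hv0 : ∀ i, v i ≠ 0 := fun i h => by simpa [h] using hv i i
  have hEv : ∀ i, E *ᵥ v i = hH.eigenvalues i • v i := hH.mulVec_eigenvectorBasis
  by_cases hperp : ∃ i, v i ⬝ᵥ ξ = 0
  · obtain ⟨i, hi⟩ := hperp
    exact ⟨v i, hv0 i, _, hEv i, hi⟩
  push Not at hperp
  have hc : ∀ i, hH.eigenvalues i = c := by
    intro i
    refine mul_right_cancel₀ (hperp i) ?_
    rw [← smul_eq_mul, ← smul_dotProduct, ← hEv, ← hE.dotProduct_mulVec_comm, hξ,
      dotProduct_smul, smul_eq_mul]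
  obtain ⟨i, j, hij⟩ := exists_pair_ne n
  refine ⟨(v j ⬝ᵥ ξ) • v i - (v i ⬝ᵥ ξ) • v j, fun h => hperp i ?_, c, ?_, ?_⟩
  · simpa [sub_dotProduct, hv, hij] using congrArg (· ⬝ᵥ v j) h
  · rw [mulVec_sub, mulVec_smul, mulVec_smul, hEv, hEv, hc, hc, smul_sub, smul_comm c,
      smul_comm c]
  · simp only [sub_dotProduct, smul_dotProduct, smul_eq_mul]
    ring

theorem Matrix.IsSymm.exists_eigenvector_dotProduct_eq_zero_of_triple_product_eq_zero
    {E : Matrix (Fin 3) (Fin 3) ℝ} (hE : E.IsSymm) {ξ : Fin 3 → ℝ}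
    (h : (ξ ×₃ (E *ᵥ ξ)) ⬝ᵥ (E * E) *ᵥ ξ = 0) :
    ∃ u ≠ 0, ∃ μ : ℝ, E *ᵥ u = μ • u ∧ u ⬝ᵥ ξ = 0 := by
  by_cases hξEξ : ξ ×₃ (E *ᵥ ξ) = 0
  · obtain ⟨c, hc⟩ : ∃ c : ℝ, E *ᵥ ξ = c • ξ := by
      by_cases hξ : ξ = 0
      · exact ⟨0, by simp [hξ]⟩
      · exact exists_eq_smul_of_cross_eq_zero hξ hξEξ
    exact hE.exists_eigenvector_dotProduct_eq_zero_of_mulVec_eq_smul hc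
  · obtain ⟨μ, hμ⟩ := exists_mulVec_cross_eq_smul hE hξEξ
      (by rw [dotProduct_comm, dot_cross_self]) (by rwa [mulVec_mulVec])
    exact ⟨_, hξEξ, μ, hμ, by rw [dotProduct_comm, dot_self_cross]⟩

theorem Matrix.IsSymm.exists_eigenvector_dotProduct_eq_zero_of_invariants_vanish
    {E : Matrix (Fin 3) (Fin 3) ℝ} (hE : E.IsSymm) {ξ η : Fin 3 → ℝ}
    (h1 : (ξ ×₃ η) ⬝ᵥ E *ᵥ ξ = 0) (h2 : (ξ ×₃ η) ⬝ᵥ E *ᵥ η = 0)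
    (h3 : (ξ ×₃ (E *ᵥ ξ)) ⬝ᵥ (E * E) *ᵥ ξ = 0) (h4 : (η ×₃ (E *ᵥ η)) ⬝ᵥ (E * E) *ᵥ η = 0) :
    ∃ u ≠ 0, ∃ μ : ℝ, E *ᵥ u = μ • u ∧ u ⬝ᵥ ξ = 0 ∧ u ⬝ᵥ η = 0 := by
  by_cases hξη : ξ ×₃ η = 0
  · by_cases hξ : ξ = 0
    · obtain ⟨u, hu, μ, hμ, huη⟩ :=
        hE.exists_eigenvector_dotProduct_eq_zero_of_triple_product_eq_zero h4
      exact ⟨u, hu, μ, hμ, by simp [hξ], huη⟩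
    · obtain ⟨k, rfl⟩ := exists_eq_smul_of_cross_eq_zero hξ hξη
      obtain ⟨u, hu, μ, hμ, huξ⟩ :=
        hE.exists_eigenvector_dotProduct_eq_zero_of_triple_product_eq_zero h3
      exact ⟨u, hu, μ, hμ, huξ, by rw [dotProduct_smul, huξ, smul_zero]⟩
  · obtain ⟨μ, hμ⟩ := exists_mulVec_cross_eq_smul hE hξη h1 h2
    exact ⟨_, hξη, μ, hμ, by rw [dotProduct_comm, dot_self_cross],
      by rw [dotProduct_comm, dot_cross_self]⟩

theorem exists_rotation_row_one_eq {u : Fin 3 → ℝ} (hu : u ⬝ᵥ u = 1) :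
    ∃ R : Matrix (Fin 3) (Fin 3) ℝ, R * Rᵀ = 1 ∧ R.det = 1 ∧ R 1 = u := by
  obtain ⟨w₀, hw₀, hw₀u⟩ := exists_ne_zero_dotProduct_eq_zero u
  obtain ⟨s, hw⟩ := exists_smul_dotProduct_self_eq_one hw₀
  set w := s • w₀
  have hwu : w ⬝ᵥ u = 0 := by rw [smul_dotProduct, hw₀u, smul_zero]
  have hcross : (w ×₃ u) ⬝ᵥ (w ×₃ u) = 1 := by
    rw [cross_dot_cross, hw, hu, hwu, dotProduct_comm u, hwu]; ring
  refine ⟨![w, u, w ×₃ u], ?_, ?_, rfl⟩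
  · ext i j
    change ![w, u, w ×₃ u] i ⬝ᵥ ![w, u, w ×₃ u] j = _
    fin_cases i <;> fin_cases j <;>
      simp [hw, hu, hwu, hcross, dotProduct_comm u w, dot_self_cross, dot_cross_self,
        dotProduct_comm (w ×₃ u)]
  · rw [← hcross, triple_product_permutation, triple_product_eq_det]

section Conjugation

variable {n R : Type*} [Fintype n] [CommSemiring R] {Q E : Matrix n n R}

theorem Matrix.mul_mul_transpose_apply (i j : n) :
    (Q * E * Qᵀ) i j = Q i ⬝ᵥ E *ᵥ Q j := by
  rw [mul_apply', dotProduct_mulVec]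
  rfl

theorem Matrix.mul_mul_transpose_apply_col_eq_zero_of_mulVec_eq_smul [DecidableEq n]
    (hQ : Q * Qᵀ = 1) {k : n} {c : R} (hk : E *ᵥ Q k = c • Q k) {i : n} (hik : i ≠ k) :
    (Q * E * Qᵀ) i k = 0 := by
  rw [mul_mul_transpose_apply, hk, dotProduct_smul]
  change c • (Q * Qᵀ) i k = 0
  rw [hQ, one_apply_ne hik, smul_zero]

theorem Matrix.mul_mul_transpose_apply_row_eq_zero_of_mulVec_eq_smul [DecidableEq n]
    (hE : E.IsSymm) (hQ : Q * Qᵀ = 1) {k : n} {c : R} (hk : E *ᵥ Q k = c • Q k) {i : n}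
    (hik : i ≠ k) : (Q * E * Qᵀ) k i = 0 := by
  rw [mul_mul_transpose_apply, hE.dotProduct_mulVec_comm, hk, smul_dotProduct]
  change c • (Q * Qᵀ) k i = 0
  rw [hQ, one_apply_ne hik.symm, smul_zero]

end Conjugation

theorem exists_CP_basis_of_invariants_vanish
    (ξ η : Fin 3 → ℝ) (E : Matrix (Fin 3) (Fin 3) ℝ) (hE : E.IsSymm)
    (h1 : (ξ ×₃ η) ⬝ᵥ E.mulVec ξ = 0)
    (h2 : (ξ ×₃ η) ⬝ᵥ E.mulVec η = 0)
    (h3 : (ξ ×₃ E.mulVec ξ) ⬝ᵥ (E * E).mulVec ξ = 0)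
    (h4 : (η ×₃ E.mulVec η) ⬝ᵥ (E * E).mulVec η = 0) :
    ∃ R : Matrix (Fin 3) (Fin 3) ℝ, R * Rᵀ = 1 ∧ R.det = 1 ∧
      R.mulVec ξ 1 = 0 ∧ R.mulVec η 1 = 0 ∧
      (R * E * Rᵀ) 0 1 = 0 ∧ (R * E * Rᵀ) 1 2 = 0 := by
  obtain ⟨u, hu, μ, hEu, huξ, huη⟩ :=
    hE.exists_eigenvector_dotProduct_eq_zero_of_invariants_vanish h1 h2 h3 h4
  obtain ⟨s, hs⟩ := exists_smul_dotProduct_self_eq_one hu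
  obtain ⟨R, hR, hdet, hR1⟩ := exists_rotation_row_one_eq hs
  have hER1 : E *ᵥ R 1 = μ • R 1 := by rw [hR1, mulVec_smul, hEu, smul_comm]
  refine ⟨R, hR, hdet, ?_, ?_, mul_mul_transpose_apply_col_eq_zero_of_mulVec_eq_smul hR hER1
    (by decide), mul_mul_transpose_apply_row_eq_zero_of_mulVec_eq_smul hE hR hER1 (by decide)⟩
  · change R 1 ⬝ᵥ ξ = 0
    rw [hR1, smul_dotProduct, huξ, smul_zero]
  · change R 1 ⬝ᵥ η = 0
    rw [hR1, smul_dotProduct, huη, smul_zero]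
end

section
/- Let V(K₀, 𝐊) = ξ₀K₀ + η₀₀K₀² + 𝐊ᵀE𝐊 with E = diag(μ₁,μ₂,μ₃), μ₁ ≥ μ₂ ≥ μ₃, η₀₀ > 0, μₐ + η₀₀ > 0 for a=1,2,3, ξ₀ < 0, μ₃ < 0. Then on the forward light cone {K₀ = |𝐊|, K₀ > 0} the minimum of V is attained at K₀ = K₃ = -ξ₀/(2(η₀₀+μ₃)), K₁ = K₂ = 0 (up to rotation in any degenerate eigenspace), and at this point the space-like vector satisfies -𝐊 ≠ 𝐊, i.e., 𝐊 ≠ 0. -/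
open Matrix

/-! On the light cone `K₀² = 𝐊 ⬝ᵥ 𝐊` the quadratic form `𝐊ᵀE𝐊` is bounded below by `μ₃ K₀²`,
with equality along the third axis, so `V ≥ ξ₀ K₀ + (η₀₀ + μ₃) K₀²`. Since `η₀₀ + μ₃ > 0`, this
parabola is minimised at `K₀ = -ξ₀ / (2(η₀₀ + μ₃))`, which is positive because `ξ₀ < 0`. -/

theorem mul_dotProduct_self_le_dotProduct_diagonal_mulVec {n : Type*} [Fintype n] [DecidableEq n]
    {d : n → ℝ} {m : ℝ} (hm : ∀ i, m ≤ d i) (w : n → ℝ) :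
    m * (w ⬝ᵥ w) ≤ w ⬝ᵥ (diagonal d).mulVec w := by
  simp only [mulVec_diagonal, dotProduct, Finset.mul_sum]
  exact Finset.sum_le_sum fun i _ => by nlinarith [hm i, mul_self_nonneg (w i)]

theorem quadratic_le_at_vertex {a b : ℝ} (ha : 0 < a) (x : ℝ) :
    b * (-b / (2 * a)) + a * (-b / (2 * a)) ^ 2 ≤ b * x + a * x ^ 2 := by
  have hvertex : b * x + a * x ^ 2 - (b * (-b / (2 * a)) + a * (-b / (2 * a)) ^ 2)
      = a * (x + b / (2 * a)) ^ 2 := by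
    field_simp
    ring
  rw [← sub_nonneg, hvertex]
  positivity

theorem dotProduct_diagonal_mulVec_vecCons_zero_zero (μ₁ μ₂ μ₃ t : ℝ) :
    ![0, 0, t] ⬝ᵥ (diagonal ![μ₁, μ₂, μ₃]).mulVec ![0, 0, t] = μ₃ * t ^ 2 := by
  simp only [dotProduct, mulVec_diagonal, Fin.sum_univ_three, cons_val_zero, cons_val_one, cons_val]
  ring

theorem typeI_vacuum_breaks_CP_general
    (ξ₀ η₀₀ μ₁ μ₂ μ₃ : ℝ)
    (hord : μ₁ ≥ μ₂ ∧ μ₂ ≥ μ₃)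
    (hμη : 0 < μ₁ + η₀₀ ∧ 0 < μ₂ + η₀₀ ∧ 0 < μ₃ + η₀₀)
    (hξ : ξ₀ < 0)
    (V : ℝ → (Fin 3 → ℝ) → ℝ)
    (hV : V = fun K0 K => ξ₀ * K0 + η₀₀ * K0 ^ 2 +
      K ⬝ᵥ (Matrix.diagonal ![μ₁, μ₂, μ₃]).mulVec K)
    (Kstar : Fin 3 → ℝ)
    (hKstar : Kstar = ![0, 0, -ξ₀ / (2 * (η₀₀ + μ₃))]) :
    (0 < -ξ₀ / (2 * (η₀₀ + μ₃)) ∧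
      (-ξ₀ / (2 * (η₀₀ + μ₃))) ^ 2 = Kstar ⬝ᵥ Kstar) ∧
    (∀ (K0 : ℝ) (K : Fin 3 → ℝ), 0 < K0 → K0 ^ 2 = K ⬝ᵥ K →
      V (-ξ₀ / (2 * (η₀₀ + μ₃))) Kstar ≤ V K0 K) ∧
    Kstar ≠ 0 := by
  have ha : 0 < η₀₀ + μ₃ := by linarith [hμη.2.2]
  set t := -ξ₀ / (2 * (η₀₀ + μ₃))
  have ht : 0 < t := div_pos (by linarith) (by linarith)
  subst hV hKstar
  refine ⟨⟨ht, ?_⟩, fun K0 K _ hcone => ?_, ?_⟩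
  · simp only [dotProduct, Fin.sum_univ_three, cons_val_zero, cons_val_one, cons_val]
    ring
  · have hμ₃_min : ∀ i, μ₃ ≤ ![μ₁, μ₂, μ₃] i := by
      intro i; fin_cases i
      exacts [hord.2.trans hord.1, hord.2, le_rfl]
    have hform := mul_dotProduct_self_le_dotProduct_diagonal_mulVec hμ₃_min K
    have hvertex := quadratic_le_at_vertex (b := ξ₀) ha K0
    simp only [dotProduct_diagonal_mulVec_vecCons_zero_zero]
    rw [← hcone] at hform
    linarith
  · intro h
    simpa [ht.ne'] using congrFun h 2

theorem typeI_vacuum_breaks_CP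
    (ξ₀ η₀₀ μ₁ μ₂ μ₃ : ℝ)
    (hord : μ₁ ≥ μ₂ ∧ μ₂ ≥ μ₃)
    (hη : 0 < η₀₀)
    (hμη : 0 < μ₁ + η₀₀ ∧ 0 < μ₂ + η₀₀ ∧ 0 < μ₃ + η₀₀)
    (hξ : ξ₀ < 0) (hμ₃ : μ₃ < 0)
    (V : ℝ → (Fin 3 → ℝ) → ℝ)
    (hV : V = fun K0 K => ξ₀ * K0 + η₀₀ * K0 ^ 2 +
      K ⬝ᵥ (Matrix.diagonal ![μ₁, μ₂, μ₃]).mulVec K)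
    (Kstar : Fin 3 → ℝ)
    (hKstar : Kstar = ![0, 0, -ξ₀ / (2 * (η₀₀ + μ₃))]) :
    (0 < -ξ₀ / (2 * (η₀₀ + μ₃)) ∧
      (-ξ₀ / (2 * (η₀₀ + μ₃))) ^ 2 = Kstar ⬝ᵥ Kstar) ∧
    (∀ (K0 : ℝ) (K : Fin 3 → ℝ), 0 < K0 → K0 ^ 2 = K ⬝ᵥ K →
      V (-ξ₀ / (2 * (η₀₀ + μ₃))) Kstar ≤ V K0 K) ∧
    Kstar ≠ 0 :=
  typeI_vacuum_breaks_CP_general ξ₀ η₀₀ μ₁ μ₂ μ₃ hord hμη hξ V hV Kstar hKstar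
end
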